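/- arXiv:1512.04428 — 5 statements merged into one kernel-verified Lean document; each statement's English description precedes it below -/
import Mathlib

section
/- Let $(\varphi_n)_{n\geq 0}$, $(\delta_n)_{n\geq 1}$, $(\alpha_n)_{n\geq 1}$ be sequences in $[0,+\infty)$ such that $\varphi_{n+1}\leq \varphi_n+\alpha_n(\varphi_n-\varphi_{n-1})+\delta_n$ for all $n\geq 1$, $\sum_{n\geq 1}\delta_n<+\infty$, and there exists $\alpha$ with $0\leq\alpha_n\leq\alpha<1$ for all $n\geq 1$. Then $\sum_{n\geq 1}\max\{\varphi_n-\varphi_{n-1},0\}<+\infty$ and $(\varphi_n)$ converges to some $\varphi^*\in[0,+\infty)$. -/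
open Filter Topology

/-- Inertial quasi-Fejér lemma (Alvarez–Attouch). -/
theorem inertial_quasi_fejer
    (φ δ α : ℕ → ℝ) (a : ℝ)
    (hφ : ∀ n, 0 ≤ φ n) (hδ : ∀ n, 1 ≤ n → 0 ≤ δ n)
    (hα0 : ∀ n, 1 ≤ n → 0 ≤ α n) (hαa : ∀ n, 1 ≤ n → α n ≤ a) (ha : a < 1)
    (hrec : ∀ n, 1 ≤ n → φ (n + 1) ≤ φ n + α n * (φ n - φ (n - 1)) + δ n)
    (hsum : Summable (fun n => δ (n + 1))) :
    Summable (fun n => max (φ (n + 1) - φ n) 0) ∧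
      ∃ l : ℝ, 0 ≤ l ∧ Tendsto φ atTop (𝓝 l) := by
  set θ : ℕ → ℝ := fun n => max (φ (n + 1) - φ n) 0 with hθdef
  have hθ0 : ∀ n, 0 ≤ θ n := fun n => le_max_right _ _
  have ha0 : 0 ≤ a := le_trans (hα0 1 le_rfl) (hαa 1 le_rfl)
  have hstep : ∀ n, θ (n + 1) ≤ a * θ n + δ (n + 1) := by
    intro n
    have h := hrec (n + 1) (by omega)
    simp only [Nat.add_sub_cancel] at h
    have h1 : φ (n + 1) - φ n ≤ θ n := le_max_left _ _
    have h2 : α (n + 1) * (φ (n + 1) - φ n) ≤ α (n + 1) * θ n :=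
      mul_le_mul_of_nonneg_left h1 (hα0 (n + 1) (by omega))
    have h3 : α (n + 1) * θ n ≤ a * θ n :=
      mul_le_mul_of_nonneg_right (hαa (n + 1) (by omega)) (hθ0 n)
    have hδn : 0 ≤ δ (n + 1) := hδ (n + 1) (by omega)
    have : φ (n + 2) - φ (n + 1) ≤ a * θ n + δ (n + 1) := by linarith
    exact max_le this (by positivity)
  set D : ℝ := ∑' n, δ (n + 1) with hDdef
  have hD : ∀ N, ∑ n ∈ Finset.range N, δ (n + 1) ≤ D := fun N =>
    Summable.sum_le_tsum _ (fun i _ => hδ (i + 1) (by omega)) hsum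
  have hD0 : 0 ≤ D := tsum_nonneg (fun i => hδ (i + 1) (by omega))
  have hbound : ∀ N, ∑ n ∈ Finset.range N, θ n ≤ (θ 0 + D) / (1 - a) := by
    intro N
    cases N with
    | zero => simpa using div_nonneg (by linarith [hθ0 0]) (by linarith)
    | succ N =>
      have hS : ∑ n ∈ Finset.range (N + 1), θ n
          = (∑ n ∈ Finset.range N, θ (n + 1)) + θ 0 := Finset.sum_range_succ' θ N
      have h1 : ∑ n ∈ Finset.range N, θ (n + 1)
          ≤ a * (∑ n ∈ Finset.range N, θ n) + ∑ n ∈ Finset.range N, δ (n + 1) := by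
        rw [Finset.mul_sum, ← Finset.sum_add_distrib]
        exact Finset.sum_le_sum (fun i _ => hstep i)
      have h2 : ∑ n ∈ Finset.range N, θ n ≤ ∑ n ∈ Finset.range (N + 1), θ n :=
        Finset.sum_le_sum_of_subset_of_nonneg (Finset.range_subset_range.2 (by omega))
          (fun i _ _ => hθ0 i)
      have h3 : ∑ n ∈ Finset.range (N + 1), θ n
          ≤ a * (∑ n ∈ Finset.range (N + 1), θ n) + D + θ 0 := by
        have := hD N
        nlinarith [h1, h2, hS]
      have h1a : 0 < 1 - a := by linarith
      rw [le_div_iff₀ h1a]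
      nlinarith [h3]
  have hθsum : Summable θ := summable_of_sum_range_le hθ0 hbound
  set T : ℕ → ℝ := fun n => ∑ k ∈ Finset.range n, θ k with hTdef
  have hTlim : Tendsto T atTop (𝓝 (∑' n, θ n)) := hθsum.hasSum.tendsto_sum_nat
  have hTle : ∀ n, T n ≤ ∑' n, θ n := fun n =>
    Summable.sum_le_tsum _ (fun i _ => hθ0 i) hθsum
  set ψ : ℕ → ℝ := fun n => φ n - T n with hψdef
  have hψanti : Antitone ψ := by
    apply antitone_nat_of_succ_le
    intro n
    have h1 : φ (n + 1) - φ n ≤ θ n := le_max_left _ _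
    have h2 : T (n + 1) = T n + θ n := Finset.sum_range_succ θ n
    simp only [hψdef]
    rw [h2]; linarith
  have hψbdd : BddBelow (Set.range ψ) := by
    refine ⟨-(∑' n, θ n), ?_⟩
    rintro x ⟨n, rfl⟩
    have := hφ n
    have := hTle n
    simp only [hψdef]
    linarith
  have hψlim : Tendsto ψ atTop (𝓝 (⨅ n, ψ n)) := tendsto_atTop_ciInf hψanti hψbdd
  have hφeq : φ = fun n => ψ n + T n := by
    funext n; simp [hψdef]
  have hφlim : Tendsto φ atTop (𝓝 ((⨅ n, ψ n) + ∑' n, θ n)) := by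
    rw [hφeq]; exact hψlim.add hTlim
  refine ⟨hθsum, (⨅ n, ψ n) + ∑' n, θ n, ?_, hφlim⟩
  exact ge_of_tendsto' hφlim hφ
end

section
/- Let $(\varphi_n)_{n\geq 0}$, $(\delta_n)_{n\geq 1}$, $(\alpha_n)_{n\geq 1}$, $(\beta_n)_{n\geq 1}$ be sequences in $[0,+\infty)$ such that $\varphi_{n+1}\leq -\beta_n+\varphi_n+\alpha_n(\varphi_n-\varphi_{n-1})+\delta_n$ for all $n\geq 1$, $\sum_{n\geq 1}\delta_n<+\infty$, and $0\leq\alpha_n\leq\alpha<1$ for all $n\geq 1$ for some real $\alpha$. Then $\sum_{n\geq 1}\beta_n<+\infty$, $(\varphi_n)$ converges, and $\sum_{n\geq 1}\max\{\varphi_n-\varphi_{n-1},0\}<+\infty$. -/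
open Filter Topology

/-- Inertial quasi-Fejér lemma with residual terms. -/
theorem inertial_quasi_fejer_residual
    (φ δ α β : ℕ → ℝ) (a : ℝ)
    (hφ : ∀ n, 0 ≤ φ n) (hδ : ∀ n, 1 ≤ n → 0 ≤ δ n)
    (hβ : ∀ n, 1 ≤ n → 0 ≤ β n)
    (hα0 : ∀ n, 1 ≤ n → 0 ≤ α n) (hαa : ∀ n, 1 ≤ n → α n ≤ a) (ha : a < 1)
    (hrec : ∀ n, 1 ≤ n → φ (n + 1) ≤ -β n + φ n + α n * (φ n - φ (n - 1)) + δ n)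
    (hsum : Summable (fun n => δ (n + 1))) :
    Summable (fun n => β (n + 1)) ∧
      (∃ l : ℝ, 0 ≤ l ∧ Tendsto φ atTop (𝓝 l)) ∧
      Summable (fun n => max (φ (n + 1) - φ n) 0) := by
  have ha0 : 0 ≤ a := le_trans (hα0 1 le_rfl) (hαa 1 le_rfl)
  set θ : ℕ → ℝ := fun n => max (φ (n + 1) - φ n) 0 with hθdef
  have hθ0 : ∀ n, 0 ≤ θ n := fun n => le_max_right _ _
  have hθge : ∀ n, φ (n + 1) - φ n ≤ θ n := fun n => le_max_left _ _
  have hδ' : ∀ n : ℕ, 0 ≤ δ (n + 1) := fun n => hδ (n + 1) (Nat.le_add_left 1 n)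
  have hβ' : ∀ n : ℕ, 0 ≤ β (n + 1) := fun n => hβ (n + 1) (Nat.le_add_left 1 n)
  have hmul : ∀ n : ℕ, α (n + 1) * (φ (n + 1) - φ n) ≤ a * θ n := by
    intro n
    calc α (n + 1) * (φ (n + 1) - φ n) ≤ α (n + 1) * θ n :=
          mul_le_mul_of_nonneg_left (hθge n) (hα0 _ (Nat.le_add_left 1 n))
      _ ≤ a * θ n := mul_le_mul_of_nonneg_right (hαa _ (Nat.le_add_left 1 n)) (hθ0 n)
  have hrec' : ∀ n : ℕ, φ (n + 2) ≤ -β (n + 1) + φ (n + 1) + a * θ n + δ (n + 1) := by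
    intro n
    have h := hrec (n + 1) (Nat.le_add_left 1 n)
    simp only [Nat.add_sub_cancel] at h
    have := hmul n
    linarith
  have hθrec : ∀ n : ℕ, θ (n + 1) ≤ a * θ n + δ (n + 1) := by
    intro n
    have h := hrec' n
    have hb := hβ' n
    have h1 : φ (n + 2) - φ (n + 1) ≤ a * θ n + δ (n + 1) := by linarith
    have h2 : (0 : ℝ) ≤ a * θ n + δ (n + 1) := by
      have := hδ' n; have := hθ0 n; positivity
    exact max_le h1 h2
  set E := ∑' n : ℕ, δ (n + 1) with hE
  have hEnn : 0 ≤ E := tsum_nonneg hδ'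
  have hδsum : ∀ N : ℕ, ∑ n ∈ Finset.range N, δ (n + 1) ≤ E :=
    fun N => Summable.sum_le_tsum (Finset.range N) (fun i _ => hδ' i) hsum
  set C := (θ 0 + E) / (1 - a) with hC
  have hSbound : ∀ N : ℕ, ∑ n ∈ Finset.range N, θ n ≤ C := by
    have key : ∀ M : ℕ, ∑ n ∈ Finset.range (M + 1), θ n ≤ C := by
      intro M
      have h1 : ∑ n ∈ Finset.range (M + 1), θ n
          = (∑ n ∈ Finset.range M, θ (n + 1)) + θ 0 := Finset.sum_range_succ' θ M
      have h2 : ∑ n ∈ Finset.range M, θ (n + 1)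
          ≤ ∑ n ∈ Finset.range M, (a * θ n + δ (n + 1)) :=
        Finset.sum_le_sum (fun i _ => hθrec i)
      have h3 : ∑ n ∈ Finset.range M, (a * θ n + δ (n + 1))
          = a * (∑ n ∈ Finset.range M, θ n) + ∑ n ∈ Finset.range M, δ (n + 1) := by
        rw [Finset.sum_add_distrib, Finset.mul_sum]
      have h4 : ∑ n ∈ Finset.range M, θ n ≤ ∑ n ∈ Finset.range (M + 1), θ n := by
        rw [Finset.sum_range_succ]; linarith [hθ0 M]
      have h5 : a * (∑ n ∈ Finset.range M, θ n) ≤ a * ∑ n ∈ Finset.range (M + 1), θ n :=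
        mul_le_mul_of_nonneg_left h4 ha0
      have h6 := hδsum M
      have h7 : (1 - a) * (∑ n ∈ Finset.range (M + 1), θ n) ≤ θ 0 + E := by linarith
      have h8 : 0 < 1 - a := by linarith
      exact (le_div_iff₀ h8).mpr (by rw [mul_comm]; exact h7)
    intro N
    cases N with
    | zero =>
      simp only [Finset.range_zero, Finset.sum_empty]
      have h8 : 0 < 1 - a := by linarith
      have : 0 ≤ θ 0 := hθ0 0
      positivity
    | succ M => exact key M
  have hθsum : Summable θ := summable_of_sum_range_le hθ0 hSbound
  have hTθ : 0 ≤ ∑' n, θ n := tsum_nonneg hθ0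
  have hθpart : ∀ N : ℕ, ∑ n ∈ Finset.range N, θ n ≤ ∑' n, θ n :=
    fun N => Summable.sum_le_tsum (Finset.range N) (fun i _ => hθ0 i) hθsum
  -- convergence of φ
  set u : ℕ → ℝ := fun n => φ n - ∑ k ∈ Finset.range n, θ k with hu
  have hanti : Antitone u := by
    apply antitone_nat_of_succ_le
    intro n
    simp only [hu, Finset.sum_range_succ]
    have := hθge n
    linarith
  have hbdd : BddBelow (Set.range u) := by
    refine ⟨-(∑' n, θ n), ?_⟩
    rintro x ⟨n, rfl⟩
    have := hθpart n
    have := hφ n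
    simp only [hu]
    linarith
  have hulim : Tendsto u atTop (𝓝 (⨅ n, u n)) := tendsto_atTop_ciInf hanti hbdd
  have hsumlim : Tendsto (fun n => ∑ k ∈ Finset.range n, θ k) atTop (𝓝 (∑' n, θ n)) :=
    hθsum.hasSum.tendsto_sum_nat
  have hφlim : Tendsto φ atTop (𝓝 ((⨅ n, u n) + ∑' n, θ n)) := by
    have : φ = fun n => u n + ∑ k ∈ Finset.range n, θ k := by
      funext n; simp [hu]
    rw [this]
    exact hulim.add hsumlim
  have hl0 : 0 ≤ (⨅ n, u n) + ∑' n, θ n := ge_of_tendsto' hφlim hφ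
  -- summability of β
  have hβbound : ∀ N : ℕ, ∑ n ∈ Finset.range N, β (n + 1) ≤ φ 1 + a * ∑' n, θ n + E := by
    intro N
    have h1 : ∀ n : ℕ, β (n + 1) ≤ (φ (n + 1) - φ (n + 2)) + a * θ n + δ (n + 1) := by
      intro n; have := hrec' n; linarith
    have h2 : ∑ n ∈ Finset.range N, β (n + 1)
        ≤ ∑ n ∈ Finset.range N, ((φ (n + 1) - φ (n + 2)) + a * θ n + δ (n + 1)) :=
      Finset.sum_le_sum (fun i _ => h1 i)
    have h3 : ∑ n ∈ Finset.range N, ((φ (n + 1) - φ (n + 2)) + a * θ n + δ (n + 1))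
        = (∑ n ∈ Finset.range N, (φ (n + 1) - φ (n + 2)))
          + a * (∑ n ∈ Finset.range N, θ n) + ∑ n ∈ Finset.range N, δ (n + 1) := by
      rw [Finset.sum_add_distrib, Finset.sum_add_distrib, Finset.mul_sum]
    have h4 : ∑ n ∈ Finset.range N, (φ (n + 1) - φ (n + 2)) = φ 1 - φ (N + 1) := by
      have := Finset.sum_range_sub' (fun i => φ (i + 1)) N
      simpa using this
    have h5 : a * (∑ n ∈ Finset.range N, θ n) ≤ a * ∑' n, θ n :=
      mul_le_mul_of_nonneg_left (hθpart N) ha0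
    have h6 := hδsum N
    have h7 := hφ (N + 1)
    linarith
  have hβsum : Summable (fun n => β (n + 1)) := summable_of_sum_range_le hβ' hβbound
  exact ⟨hβsum, ⟨_, hl0, hφlim⟩, hθsum⟩
end

section
/- Let $\mathcal{H}$ be a real Hilbert space, $F\subseteq\mathcal{H}$ nonempty, $(x_n)_{n\geq 1}$ a sequence such that $\lim_{n\to\infty}\|x_n-x\|$ exists for every $x\in F$, $(\lambda_k)_{k\geq 1}$ positive reals with $\sum_{k\geq 1}\lambda_k=+\infty$, and define $z_n=\tau_n^{-1}\sum_{k=1}^n\lambda_k x_k$ with $\tau_n=\sum_{k=1}^n\lambda_k$. If every sequential weak cluster point of $(z_n)$ lies in $F$, then $(z_n)$ converges weakly to an element of $F$. -/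
open Filter Topology
open scoped RealInnerProductSpace

/-- `x` is the weak limit of the sequence `xs` in a real Hilbert space. -/
def WeakLimit {H : Type*} [NormedAddCommGroup H] [InnerProductSpace ℝ H]
    (xs : ℕ → H) (x : H) : Prop :=
  ∀ y : H, Tendsto (fun n => ⟪xs n, y⟫) atTop (𝓝 ⟪x, y⟫)

/-- `x` is a sequential weak cluster point of the sequence `xs`. -/
def WeakClusterPt {H : Type*} [NormedAddCommGroup H] [InnerProductSpace ℝ H]
    (xs : ℕ → H) (x : H) : Prop :=
  ∃ σ : ℕ → ℕ, StrictMono σ ∧ WeakLimit (xs ∘ σ) x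

/-! Since `‖xs n - x₀‖` converges for some `x₀ ∈ F`, the sequence `xs`, and with it every weighted
average `z n`, is bounded; so `z` has a weak cluster point. For `x, x' ∈ F`, polarization turns
the convergence of `‖xs n - x‖` and `‖xs n - x'‖` into convergence of `⟪xs n, x - x'⟫`, and
weighted Cesàro averaging passes this on to `⟪z n, x - x'⟫`. Two weak cluster points `p, q` of `z`
lie in `F`, so `⟪p, p - q⟫ = ⟪q, p - q⟫`, i.e. `p = q`; a bounded sequence with a single weak
cluster point converges weakly to it. -/

open Finset

theorem Finset.sum_Icc_one_eq_sum_range {M : Type*} [AddCommMonoid M] (f : ℕ → M) (n : ℕ) :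
    ∑ k ∈ Icc 1 n, f k = ∑ k ∈ range n, f (k + 1) := by
  rw [← Ico_add_one_right_eq_Icc, sum_Ico_eq_sum_range, Nat.add_sub_cancel]
  simp only [add_comm]

theorem Finset.centerMass_Icc_one_eq_range {E : Type*} [AddCommGroup E] [Module ℝ E]
    (w : ℕ → ℝ) (z : ℕ → E) (n : ℕ) :
    (Icc 1 n).centerMass w z = (range n).centerMass (fun k ↦ w (k + 1)) (fun k ↦ z (k + 1)) := by
  simp only [centerMass, sum_Icc_one_eq_sum_range]

theorem norm_centerMass_le {ι E : Type*} [SeminormedAddCommGroup E] [NormedSpace ℝ E]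
    {t : Finset ι} {w : ι → ℝ} {z : ι → E} {C : ℝ} (hw : ∀ i ∈ t, 0 ≤ w i)
    (hz : ∀ i ∈ t, ‖z i‖ ≤ C) (hC : 0 ≤ C) : ‖t.centerMass w z‖ ≤ C := by
  rcases (sum_nonneg hw).eq_or_lt with hsum | hsum
  · simp [centerMass, ← hsum, hC]
  · exact mem_closedBall_zero_iff.1 <| (convex_closedBall 0 C).centerMass_mem hw hsum
      fun i hi ↦ mem_closedBall_zero_iff.2 (hz i hi)

theorem real_inner_centerMass_left {ι H : Type*} [NormedAddCommGroup H] [InnerProductSpace ℝ H]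
    (t : Finset ι) (w : ι → ℝ) (x : ι → H) (y : H) :
    ⟪t.centerMass w x, y⟫ = t.centerMass w (fun i ↦ ⟪x i, y⟫) := by
  simp only [centerMass, real_inner_smul_left, sum_inner, smul_eq_mul]

theorem Filter.Tendsto.centerMass_range {E : Type*} [NormedAddCommGroup E] [NormedSpace ℝ E]
    {u : ℕ → E} {l : E} (h : Tendsto u atTop (𝓝 l)) {w : ℕ → ℝ} (hw : ∀ k, 0 ≤ w k)
    (hW : Tendsto (fun n ↦ ∑ k ∈ range n, w k) atTop atTop) :
    Tendsto (fun n ↦ (range n).centerMass w u) atTop (𝓝 l) := by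
  have hsmall : (fun k ↦ w k • (u k - l)) =o[atTop] w := by
    simpa using (Asymptotics.isBigO_refl w atTop).smul_isLittleO
      ((Asymptotics.isLittleO_one_iff ℝ).2 (tendsto_sub_nhds_zero_iff.2 h))
  rw [← tendsto_sub_nhds_zero_iff]
  refine ((hsmall.sum_range hw hW).tendsto_inv_smul_nhds_zero).congr' ?_
  filter_upwards [hW.eventually_gt_atTop 0] with n hn
  simp only [centerMass, smul_sub, sum_sub_distrib, ← sum_smul, smul_smul, inv_mul_cancel₀ hn.ne',
    one_smul]

theorem exists_norm_le_of_tendsto_norm_sub {E : Type*} [SeminormedAddCommGroup E] {u : ℕ → E}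
    {x : E} {a : ℝ} (h : Tendsto (fun n ↦ ‖u n - x‖) atTop (𝓝 a)) : ∃ C, ∀ n, ‖u n‖ ≤ C := by
  obtain ⟨B, hB⟩ := h.bddAbove_range
  exact ⟨B + ‖x‖, fun n ↦ (norm_le_norm_sub_add (u n) x).trans
    (add_le_add_left (hB (Set.mem_range_self n)) _)⟩

section InnerProductSpace

variable {H : Type*} [NormedAddCommGroup H] [InnerProductSpace ℝ H]

theorem tendsto_inner_sub_of_tendsto_norm_sub {ι : Type*} {l : Filter ι} {u : ι → H} {x x' : H}
    {a a' : ℝ} (h : Tendsto (fun n ↦ ‖u n - x‖) l (𝓝 a))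
    (h' : Tendsto (fun n ↦ ‖u n - x'‖) l (𝓝 a')) :
    Tendsto (fun n ↦ ⟪u n, x - x'⟫) l (𝓝 ((a' ^ 2 - a ^ 2 + ‖x‖ ^ 2 - ‖x'‖ ^ 2) / 2)) := by
  refine (((((h'.pow 2).sub (h.pow 2)).add_const _).sub_const _).div_const 2).congr fun n ↦ ?_
  rw [norm_sub_sq_real, norm_sub_sq_real, inner_sub_right]
  ring

theorem WeakClusterPt.of_comp {u : ℕ → H} {σ : ℕ → ℕ} (hσ : StrictMono σ) {p : H}
    (hp : WeakClusterPt (u ∘ σ) p) : WeakClusterPt u p :=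
  let ⟨φ, hφ, hlim⟩ := hp
  ⟨σ ∘ φ, hσ.comp hφ, hlim⟩

theorem WeakClusterPt.inner_eq_of_tendsto {u : ℕ → H} {p y : H} {c : ℝ} (hp : WeakClusterPt u p)
    (h : Tendsto (fun n ↦ ⟪u n, y⟫) atTop (𝓝 c)) : ⟪p, y⟫ = c :=
  let ⟨_, hσ, hlim⟩ := hp
  tendsto_nhds_unique (hlim y) (h.comp hσ.tendsto_atTop)

theorem WeakClusterPt.eq_of_tendsto_inner_sub {u : ℕ → H} {p q : H} {c : ℝ}
    (hp : WeakClusterPt u p) (hq : WeakClusterPt u q)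
    (h : Tendsto (fun n ↦ ⟪u n, p - q⟫) atTop (𝓝 c)) : p = q := by
  have hpq : ⟪p - q, p - q⟫ = 0 := by
    rw [inner_sub_left, hp.inner_eq_of_tendsto h, hq.inner_eq_of_tendsto h, sub_self]
  exact sub_eq_zero.1 (inner_self_eq_zero.1 hpq)

/-- Sequential Banach–Alaoglu applies to the Riesz images of the `u n` in the dual of the separable
space `K`; a test vector `y ∉ K` pairs with `u n` as its orthogonal projection onto `K` does. -/
theorem exists_weakClusterPt_of_mem_of_norm_le (K : Submodule ℝ H) [CompleteSpace K]
    [TopologicalSpace.SeparableSpace K] {u : ℕ → H} (huK : ∀ n, u n ∈ K) {C : ℝ}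
    (hu : ∀ n, ‖u n‖ ≤ C) : ∃ p, WeakClusterPt u p := by
  have hv : ∀ n, StrongDual.toWeakDual (InnerProductSpace.toDual ℝ K ⟨u n, huK n⟩) ∈
      WeakDual.toStrongDual ⁻¹' Metric.closedBall 0 C := fun n ↦ by
    simpa using hu n
  obtain ⟨f, -, φ, hφ, hf⟩ := WeakDual.isSeqCompact_closedBall ℝ K 0 C hv
  refine ⟨(InnerProductSpace.toDual ℝ K).symm (WeakDual.toStrongDual f), φ, hφ, fun y ↦ ?_⟩
  have := ((WeakDual.eval_continuous (K.orthogonalProjectionOnto y)).tendsto f).comp hf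
  rw [← Submodule.inner_orthogonalProjectionOnto_eq_of_mem_left,
    InnerProductSpace.toDual_symm_apply]
  simpa [Function.comp_def] using this

variable [CompleteSpace H]

theorem exists_weakClusterPt_of_norm_le {u : ℕ → H} {C : ℝ} (hu : ∀ n, ‖u n‖ ≤ C) :
    ∃ p, WeakClusterPt u p := by
  set K := (Submodule.span ℝ (Set.range u)).topologicalClosure
  have : CompleteSpace K := (Submodule.isClosed_topologicalClosure _).completeSpace_coe
  have : TopologicalSpace.SeparableSpace K := by
    have hsep := ((Set.countable_range u).isSeparable.span (R := ℝ)).closure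
    rw [← Submodule.topologicalClosure_coe] at hsep
    exact hsep.separableSpace
  exact exists_weakClusterPt_of_mem_of_norm_le K
    (fun n ↦ Submodule.le_topologicalClosure _ (Submodule.subset_span (Set.mem_range_self n))) hu

theorem weakLimit_of_forall_weakClusterPt_eq {u : ℕ → H} {C : ℝ} (hu : ∀ n, ‖u n‖ ≤ C) {p : H}
    (h : ∀ q, WeakClusterPt u q → q = p) : WeakLimit u p := by
  intro y
  refine tendsto_of_subseq_tendsto fun ns hns ↦ ?_
  obtain ⟨ψ, -, hψ⟩ := strictMono_subseq_of_tendsto_atTop hns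
  obtain ⟨q, φ, hφ, hlim⟩ := exists_weakClusterPt_of_norm_le fun n ↦ hu (ns (ψ n))
  have hqp : q = p := h q (WeakClusterPt.of_comp hψ ⟨φ, hφ, hlim⟩)
  exact ⟨ψ ∘ φ, hqp ▸ hlim y⟩

end InnerProductSpace

/-- Opial–Passty lemma: weak convergence of weighted ergodic averages. -/
theorem opial_passty_lemma {H : Type*} [NormedAddCommGroup H] [InnerProductSpace ℝ H]
    [CompleteSpace H] (F : Set H) (hF : F.Nonempty) (xs : ℕ → H) (lam : ℕ → ℝ)
    (hlam : ∀ k, 1 ≤ k → 0 < lam k)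
    (τ : ℕ → ℝ) (hτ : ∀ n, τ n = ∑ k ∈ Finset.Icc 1 n, lam k)
    (hdiv : Tendsto τ atTop atTop)
    (z : ℕ → H) (hz : ∀ n, z n = (τ n)⁻¹ • ∑ k ∈ Finset.Icc 1 n, lam k • xs k)
    (hfejer : ∀ x ∈ F, ∃ l : ℝ, Tendsto (fun n => ‖xs n - x‖) atTop (𝓝 l))
    (hclust : ∀ x : H, WeakClusterPt z x → x ∈ F) :
    ∃ x ∈ F, WeakLimit z x := by
  have hzc : ∀ n, z n = (Icc 1 n).centerMass lam xs := fun n ↦ by rw [hz, hτ]; rfl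
  obtain ⟨x₀, hx₀⟩ := hF
  obtain ⟨a₀, ha₀⟩ := hfejer x₀ hx₀
  obtain ⟨C, hC⟩ := exists_norm_le_of_tendsto_norm_sub ha₀
  have hzC : ∀ n, ‖z n‖ ≤ C := fun n ↦ hzc n ▸ norm_centerMass_le
    (fun k hk ↦ (hlam k (mem_Icc.1 hk).1).le) (fun k _ ↦ hC k) ((norm_nonneg _).trans (hC 0))
  have hinner : ∀ x ∈ F, ∀ x' ∈ F, ∃ c, Tendsto (fun n ↦ ⟪z n, x - x'⟫) atTop (𝓝 c) := by
    intro x hx x' hx'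
    obtain ⟨a, ha⟩ := hfejer x hx
    obtain ⟨a', ha'⟩ := hfejer x' hx'
    have hW : Tendsto (fun n ↦ ∑ k ∈ range n, lam (k + 1)) atTop atTop := by
      simpa only [← sum_Icc_one_eq_sum_range, ← hτ] using hdiv
    have hlim := ((tendsto_add_atTop_iff_nat 1).2
      (tendsto_inner_sub_of_tendsto_norm_sub ha ha')).centerMass_range
      (fun k ↦ (hlam (k + 1) k.succ_pos).le) hW
    refine ⟨_, hlim.congr fun n ↦ ?_⟩
    rw [hzc, real_inner_centerMass_left, centerMass_Icc_one_eq_range]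
  obtain ⟨p, hp⟩ := exists_weakClusterPt_of_norm_le hzC
  refine ⟨p, hclust p hp, weakLimit_of_forall_weakClusterPt_eq hzC fun q hq ↦ ?_⟩
  obtain ⟨c, hc⟩ := hinner q (hclust q hq) p (hclust p hp)
  exact hq.eq_of_tendsto_inner_sub hp hc
end

section
/- With the notation of the previous statement, assume additionally that $C$ is $\nu$-Lipschitz continuous and each $D_i^{-1}$ is $\nu_i$-Lipschitz continuous. Then $\widetilde D$ is $\beta$-Lipschitz continuous on the product Hilbert space, where $\beta=\max\{\nu,\nu_1,\dots,\nu_m\}+\sqrt{\sum_{i=1}^m\|L_i\|^2}$. -/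
open scoped RealInnerProductSpace

private lemma mink_pi {ι : Type*} [Fintype ι] (f g : ι → ℝ) :
    Real.sqrt (∑ i, (f i + g i) ^ 2) ≤
      Real.sqrt (∑ i, f i ^ 2) + Real.sqrt (∑ i, g i ^ 2) := by
  have h := norm_add_le ((WithLp.equiv 2 (ι → ℝ)).symm f) ((WithLp.equiv 2 (ι → ℝ)).symm g)
  simpa [EuclideanSpace.norm_eq, Real.norm_eq_abs, sq_abs] using h

private lemma mink_option {ι : Type*} [Fintype ι] (a c : ℝ) (b e : ι → ℝ) :
    Real.sqrt ((a + c) ^ 2 + ∑ i, (b i + e i) ^ 2) ≤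
      Real.sqrt (a ^ 2 + ∑ i, b i ^ 2) + Real.sqrt (c ^ 2 + ∑ i, e i ^ 2) := by
  have h := mink_pi (ι := Option ι) (fun j => j.elim a b) (fun j => j.elim c e)
  simpa [Fintype.sum_option] using h

set_option maxHeartbeats 1000000 in
/-- Lipschitz continuity, with constant
`β = max{ν, ν₁, ..., νₘ} + sqrt (∑ i, ‖Lᵢ‖²)`, of the operator
`D̃(x, v) = (∑ i, Lᵢ* vᵢ + C x, D₁⁻¹ v₁ - L₁ x, ..., Dₘ⁻¹ vₘ - Lₘ x)` on the
product Hilbert space `H × G 1 × ... × G m` endowed with the norm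
`‖(x, v)‖ = sqrt (‖x‖² + ∑ i, ‖vᵢ‖²)`. -/
theorem tildeD_lipschitz {H : Type*} [NormedAddCommGroup H] [InnerProductSpace ℝ H]
    [CompleteSpace H] {ι : Type*} [Fintype ι]
    {G : ι → Type*} [∀ i, NormedAddCommGroup (G i)] [∀ i, InnerProductSpace ℝ (G i)]
    [∀ i, CompleteSpace (G i)]
    (C : H → H) (ν : ℝ)
    (hC : ∀ x y : H, ‖C x - C y‖ ≤ ν * ‖x - y‖)
    (Dinv : ∀ i, G i → G i) (νi : ι → ℝ)
    (hD : ∀ i, ∀ v w : G i, ‖Dinv i v - Dinv i w‖ ≤ νi i * ‖v - w‖)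
    (L : ∀ i, H →L[ℝ] G i) (β : ℝ)
    (hβ : β = max ν (⨆ i, νi i) + Real.sqrt (∑ i, ‖L i‖ ^ 2)) :
    ∀ (x y : H) (v w : ∀ i, G i),
      Real.sqrt
          (‖(∑ i, (L i).adjoint (v i) + C x) - (∑ i, (L i).adjoint (w i) + C y)‖ ^ 2 +
            ∑ i, ‖(Dinv i (v i) - L i x) - (Dinv i (w i) - L i y)‖ ^ 2) ≤
        β * Real.sqrt (‖x - y‖ ^ 2 + ∑ i, ‖v i - w i‖ ^ 2) := by
  intro x y v w
  set β₀ : ℝ := max ν (⨆ i, νi i) with hβ₀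
  have hν : ν ≤ β₀ := le_max_left _ _
  have hνi : ∀ i, νi i ≤ β₀ := fun i =>
    le_trans (le_ciSup (Set.Finite.bddAbove (Set.finite_range _)) i) (le_max_right _ _)
  by_cases hb : 0 ≤ β₀
  · -- main case
    have hrw1 : (∑ i, (L i).adjoint (v i) + C x) - (∑ i, (L i).adjoint (w i) + C y)
        = (C x - C y) + ∑ i, (L i).adjoint (v i - w i) := by
      simp only [map_sub, Finset.sum_sub_distrib]
      abel
    have hrw2 : ∀ i, (Dinv i (v i) - L i x) - (Dinv i (w i) - L i y)
        = (Dinv i (v i) - Dinv i (w i)) + (L i (y - x)) := by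
      intro i
      simp only [map_sub]
      abel
    rw [hrw1]
    simp only [hrw2]
    have step1 :
        Real.sqrt (‖(C x - C y) + ∑ i, (L i).adjoint (v i - w i)‖ ^ 2 +
            ∑ i, ‖(Dinv i (v i) - Dinv i (w i)) + (L i (y - x))‖ ^ 2) ≤
        Real.sqrt ((‖C x - C y‖ + ‖∑ i, (L i).adjoint (v i - w i)‖) ^ 2 +
            ∑ i, (‖Dinv i (v i) - Dinv i (w i)‖ + ‖L i (y - x)‖) ^ 2) := by
      apply Real.sqrt_le_sqrt
      gcongr
      · exact norm_add_le _ _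
      · exact norm_add_le _ _
    have step2 := mink_option (‖C x - C y‖) (‖∑ i, (L i).adjoint (v i - w i)‖)
      (fun i => ‖Dinv i (v i) - Dinv i (w i)‖) (fun i => ‖L i (y - x)‖)
    -- bound the "A" part
    have hA : Real.sqrt (‖C x - C y‖ ^ 2 + ∑ i, ‖Dinv i (v i) - Dinv i (w i)‖ ^ 2) ≤
        β₀ * Real.sqrt (‖x - y‖ ^ 2 + ∑ i, ‖v i - w i‖ ^ 2) := by
      have h0 : ‖C x - C y‖ ≤ β₀ * ‖x - y‖ :=
        le_trans (hC x y) (mul_le_mul_of_nonneg_right hν (norm_nonneg _))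
      have h1 : ‖C x - C y‖ ^ 2 ≤ β₀ ^ 2 * ‖x - y‖ ^ 2 := by
        have := pow_le_pow_left₀ (norm_nonneg _) h0 2
        simpa [mul_pow] using this
      have h2 : ∀ i, ‖Dinv i (v i) - Dinv i (w i)‖ ^ 2 ≤ β₀ ^ 2 * ‖v i - w i‖ ^ 2 := by
        intro i
        have h0 : ‖Dinv i (v i) - Dinv i (w i)‖ ≤ β₀ * ‖v i - w i‖ :=
          le_trans (hD i (v i) (w i)) (mul_le_mul_of_nonneg_right (hνi i) (norm_nonneg _))
        have := pow_le_pow_left₀ (norm_nonneg _) h0 2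
        simpa [mul_pow] using this
      calc Real.sqrt (‖C x - C y‖ ^ 2 + ∑ i, ‖Dinv i (v i) - Dinv i (w i)‖ ^ 2)
          ≤ Real.sqrt (β₀ ^ 2 * (‖x - y‖ ^ 2 + ∑ i, ‖v i - w i‖ ^ 2)) := by
            apply Real.sqrt_le_sqrt
            rw [mul_add, Finset.mul_sum]
            exact add_le_add h1 (Finset.sum_le_sum fun i _ => h2 i)
        _ = β₀ * Real.sqrt (‖x - y‖ ^ 2 + ∑ i, ‖v i - w i‖ ^ 2) := by
            rw [Real.sqrt_mul (sq_nonneg _), Real.sqrt_sq hb]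
    -- bound the "B" part
    have hB : Real.sqrt (‖∑ i, (L i).adjoint (v i - w i)‖ ^ 2 + ∑ i, ‖L i (y - x)‖ ^ 2) ≤
        Real.sqrt (∑ i, ‖L i‖ ^ 2) * Real.sqrt (‖x - y‖ ^ 2 + ∑ i, ‖v i - w i‖ ^ 2) := by
      have hb1 : ‖∑ i, (L i).adjoint (v i - w i)‖ ^ 2 ≤
          (∑ i, ‖L i‖ ^ 2) * ∑ i, ‖v i - w i‖ ^ 2 := by
        have ht : ‖∑ i, (L i).adjoint (v i - w i)‖ ≤ ∑ i, ‖L i‖ * ‖v i - w i‖ := by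
          refine (norm_sum_le _ _).trans (Finset.sum_le_sum fun i _ => ?_)
          calc ‖(L i).adjoint (v i - w i)‖ ≤ ‖(L i).adjoint‖ * ‖v i - w i‖ :=
                (L i).adjoint.le_opNorm _
            _ = ‖L i‖ * ‖v i - w i‖ := by
                rw [LinearIsometryEquiv.norm_map ContinuousLinearMap.adjoint]
        have hcs := Finset.sum_mul_sq_le_sq_mul_sq Finset.univ
          (fun i => ‖L i‖) (fun i => ‖v i - w i‖)
        calc ‖∑ i, (L i).adjoint (v i - w i)‖ ^ 2 ≤ (∑ i, ‖L i‖ * ‖v i - w i‖) ^ 2 := by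
              have hs : (0:ℝ) ≤ ∑ i, ‖L i‖ * ‖v i - w i‖ :=
                Finset.sum_nonneg fun i _ => mul_nonneg (norm_nonneg _) (norm_nonneg _)
              nlinarith [norm_nonneg (∑ i, (L i).adjoint (v i - w i))]
          _ ≤ (∑ i, ‖L i‖ ^ 2) * ∑ i, ‖v i - w i‖ ^ 2 := hcs
      have hb2 : ∑ i, ‖L i (y - x)‖ ^ 2 ≤ (∑ i, ‖L i‖ ^ 2) * ‖x - y‖ ^ 2 := by
        rw [Finset.sum_mul]
        refine Finset.sum_le_sum fun i _ => ?_
        have h0 : ‖L i (y - x)‖ ≤ ‖L i‖ * ‖x - y‖ := by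
          rw [← norm_sub_rev y x]
          exact (L i).le_opNorm (y - x)
        have := pow_le_pow_left₀ (norm_nonneg _) h0 2
        simpa [mul_pow] using this
      calc Real.sqrt (‖∑ i, (L i).adjoint (v i - w i)‖ ^ 2 + ∑ i, ‖L i (y - x)‖ ^ 2)
          ≤ Real.sqrt ((∑ i, ‖L i‖ ^ 2) * (‖x - y‖ ^ 2 + ∑ i, ‖v i - w i‖ ^ 2)) := by
            apply Real.sqrt_le_sqrt
            rw [mul_add]
            linarith
        _ = Real.sqrt (∑ i, ‖L i‖ ^ 2) * Real.sqrt (‖x - y‖ ^ 2 + ∑ i, ‖v i - w i‖ ^ 2) :=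
            Real.sqrt_mul (Finset.sum_nonneg fun i _ => sq_nonneg _) _
    calc Real.sqrt (‖(C x - C y) + ∑ i, (L i).adjoint (v i - w i)‖ ^ 2 +
            ∑ i, ‖(Dinv i (v i) - Dinv i (w i)) + (L i (y - x))‖ ^ 2)
        ≤ Real.sqrt ((‖C x - C y‖ + ‖∑ i, (L i).adjoint (v i - w i)‖) ^ 2 +
            ∑ i, (‖Dinv i (v i) - Dinv i (w i)‖ + ‖L i (y - x)‖) ^ 2) := step1
      _ ≤ Real.sqrt (‖C x - C y‖ ^ 2 + ∑ i, ‖Dinv i (v i) - Dinv i (w i)‖ ^ 2) +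
            Real.sqrt (‖∑ i, (L i).adjoint (v i - w i)‖ ^ 2 + ∑ i, ‖L i (y - x)‖ ^ 2) := step2
      _ ≤ β₀ * Real.sqrt (‖x - y‖ ^ 2 + ∑ i, ‖v i - w i‖ ^ 2) +
            Real.sqrt (∑ i, ‖L i‖ ^ 2) * Real.sqrt (‖x - y‖ ^ 2 + ∑ i, ‖v i - w i‖ ^ 2) :=
          add_le_add hA hB
      _ = β * Real.sqrt (‖x - y‖ ^ 2 + ∑ i, ‖v i - w i‖ ^ 2) := by rw [hβ]; ring
  · -- degenerate case: β₀ < 0 forces all spaces trivial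
    push_neg at hb
    have hxy : x = y := by
      by_contra h
      have h1 := hC x y
      have h2 : 0 < ‖x - y‖ := by
        rwa [norm_pos_iff, sub_ne_zero]
      nlinarith [norm_nonneg (C x - C y)]
    have hvw : v = w := by
      funext i
      by_contra h
      have h1 := hD i (v i) (w i)
      have h2 : 0 < ‖v i - w i‖ := by
        rwa [norm_pos_iff, sub_ne_zero]
      have := hνi i
      nlinarith [norm_nonneg (Dinv i (v i) - Dinv i (w i))]
    subst hxy hvw
    simp only [sub_self, norm_zero, ne_eq, OfNat.ofNat_ne_zero, not_false_eq_true, zero_pow,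
      Finset.sum_const_zero, add_zero, Real.sqrt_zero, mul_zero, le_refl]
end

section
/- Let $\mathcal{H}$ be a real Hilbert space, $A:\mathcal{H}\rightrightarrows\mathcal{H}$ maximally monotone, $D:\mathcal{H}\to\mathcal{H}$ monotone and $\eta^{-1}$-Lipschitz, $B:\mathcal{H}\to\mathcal{H}$ monotone and $\mu^{-1}$-Lipschitz with $M=\operatorname{zer}B\neq\emptyset$. Given $x_{n-1},x_n\in\mathcal{H}$, $\lambda_n,\beta_n>0$, $\alpha_n\geq 0$, define $p_n=J_{\lambda_n A}(x_n-\lambda_n Dx_n-\lambda_n\beta_n Bx_n+\alpha_n(x_n-x_{n-1}))$ and $x_{n+1}=\lambda_n\beta_n(Bx_n-Bp_n)+\lambda_n(Dx_n-Dp_n)+p_n$. Then for every $(u,w)\in\operatorname{gr}(A+D+N_M)$ with $w=v+p+Du$, $v\in Au$, $p\in N_M(u)$: $\|x_{n+1}-u\|^2-\|x_n-u\|^2\leq\alpha_n(\|x_n-u\|^2-\|x_{n-1}-u\|^2)+2\alpha_n\|x_n-x_{n-1}\|^2-[1-(\lambda_n\beta_n/\mu+\lambda_n/\eta)^2-\alpha_n]\|x_n-p_n\|^2+2\lambda_n\beta_n[\sup_{u'\in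 M}\varphi_B(u',p/\beta_n)-\sigma_M(p/\beta_n)]+2\lambda_n\langle u-p_n,w\rangle$. -/
/-! Expanding `‖xₙ₊₁ - u‖²` around `pₙ` leaves `-‖xₙ - pₙ‖² + ‖xₙ₊₁ - pₙ‖² + 2⟪pₙ - u, xₙ₊₁ - xₙ⟫`.
The forward correction `xₙ₊₁ - pₙ` is bounded by the Lipschitz constants of `B` and `D`; the
resolvent step writes `xₙ₊₁ - xₙ` as the inertial term minus `λ(a + D pₙ + β B pₙ)` with
`a ∈ A pₙ`, and monotonicity of `A + D` compares `a + D pₙ` with `w - p`. Polarization and Young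
split the inertial term. What is left, `⟪u - pₙ, B pₙ⟫ + ⟪pₙ - u, p/β⟫`, is one of the values
whose supremum is the Fitzpatrick function at `(u, p/β)`, minus `⟪u, p/β⟫`, which is the support
function of `M` at `p/β` because `p/β` is normal to `M` at `u`. -/

open scoped RealInnerProductSpace

section
variable {H : Type*} [NormedAddCommGroup H] [InnerProductSpace ℝ H]

/-- A set-valued operator is maximally monotone. -/
def IsMaximallyMonotone (A : H → Set H) : Prop :=
  (∀ ⦃x u y v : H⦄, u ∈ A x → v ∈ A y → (0 : ℝ) ≤ ⟪x - y, u - v⟫) ∧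
    ∀ x u : H, (∀ y v : H, v ∈ A y → (0 : ℝ) ≤ ⟪x - y, u - v⟫) → u ∈ A x

/-- The Fitzpatrick function of a single-valued operator. -/
noncomputable def fitzpatrickFn (B : H → H) (x u : H) : EReal :=
  ⨆ y : H, ((⟪x, B y⟫ + ⟪y, u⟫ - ⟪y, B y⟫ : ℝ) : EReal)

/-- The support function of a set, with values in the extended reals. -/
noncomputable def suppFn (M : Set H) (u : H) : EReal :=
  ⨆ y : M, (((⟪(y : H), u⟫ : ℝ)) : EReal)

/-- The normal cone to a set `M` at `x`. -/
def normalCone (M : Set H) (x : H) : Set H :=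
  {u : H | x ∈ M ∧ ∀ y ∈ M, ⟪u, y - x⟫ ≤ (0 : ℝ)}

end

section FBF
variable {H : Type*} [NormedAddCommGroup H] [InnerProductSpace ℝ H]

theorem norm_sub_sq_eq_three_point (x y p u : H) :
    ‖y - u‖ ^ 2 = ‖x - u‖ ^ 2 - ‖x - p‖ ^ 2 + ‖y - p‖ ^ 2 + 2 * ⟪p - u, y - x⟫ := by
  rw [show y - u = (y - p) + (p - u) by abel, show x - u = (x - p) + (p - u) by abel,
    show y - x = (y - p) - (x - p) by abel, norm_add_sq_real, norm_add_sq_real,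
    inner_sub_right (p - u), real_inner_comm (p - u) (y - p), real_inner_comm (p - u) (x - p)]
  ring

theorem two_mul_inner_sub_le_inertial (x y p u : H) :
    2 * ⟪p - u, x - y⟫ ≤ ‖x - u‖ ^ 2 - ‖y - u‖ ^ 2 + 2 * ‖x - y‖ ^ 2 + ‖x - p‖ ^ 2 := by
  have polar : 2 * ⟪x - u, x - y⟫ = ‖x - u‖ ^ 2 + ‖x - y‖ ^ 2 - ‖y - u‖ ^ 2 := by
    have h := norm_sub_sq_real (x - u) (x - y)
    rw [show x - u - (x - y) = y - u by abel] at h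
    linarith
  have young : 2 * ⟪p - x, x - y⟫ ≤ ‖x - p‖ ^ 2 + ‖x - y‖ ^ 2 := by
    rw [← norm_neg (x - p), neg_sub]
    nlinarith [real_inner_le_norm (p - x) (x - y), two_mul_le_add_sq ‖p - x‖ ‖x - y‖]
  rw [show p - u = (p - x) + (x - u) by abel, inner_add_left]
  linarith

theorem norm_smul_add_smul_sub_le_of_lipschitz {B D : H → H} {μ η : ℝ}
    (hBlip : ∀ x y : H, ‖B x - B y‖ ≤ μ⁻¹ * ‖x - y‖)
    (hDlip : ∀ x y : H, ‖D x - D y‖ ≤ η⁻¹ * ‖x - y‖) {s t : ℝ} (hs : 0 ≤ s) (ht : 0 ≤ t)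
    (x y : H) :
    ‖s • (B x - B y) + t • (D x - D y)‖ ≤ (s / μ + t / η) * ‖x - y‖ :=
  calc ‖s • (B x - B y) + t • (D x - D y)‖
      ≤ s * ‖B x - B y‖ + t * ‖D x - D y‖ := by
        refine (norm_add_le _ _).trans_eq ?_
        rw [norm_smul_of_nonneg hs, norm_smul_of_nonneg ht]
    _ ≤ s * (μ⁻¹ * ‖x - y‖) + t * (η⁻¹ * ‖x - y‖) :=
        add_le_add (mul_le_mul_of_nonneg_left (hBlip x y) hs)
          (mul_le_mul_of_nonneg_left (hDlip x y) ht)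
    _ = (s / μ + t / η) * ‖x - y‖ := by ring

theorem inner_add_le_inner_add_of_monotone {A : H → Set H} {D : H → H}
    (hA : ∀ ⦃x u y v : H⦄, u ∈ A x → v ∈ A y → (0 : ℝ) ≤ ⟪x - y, u - v⟫)
    (hD : ∀ x y : H, (0 : ℝ) ≤ ⟪x - y, D x - D y⟫)
    {x u a v : H} (ha : a ∈ A x) (hv : v ∈ A u) :
    ⟪x - u, v + D u⟫ ≤ ⟪x - u, a + D x⟫ := by
  have hmon := add_nonneg (hA ha hv) (hD x u)
  rw [← inner_add_right, show a - v + (D x - D u) = (a + D x) - (v + D u) by abel,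
    inner_sub_right] at hmon
  linarith

theorem smul_mem_normalCone {M : Set H} {u p : H} (hp : p ∈ normalCone M u) {c : ℝ}
    (hc : 0 ≤ c) : c • p ∈ normalCone M u :=
  ⟨hp.1, fun y hy => by
    rw [inner_smul_left, RCLike.conj_to_real]
    exact mul_nonpos_of_nonneg_of_nonpos hc (hp.2 y hy)⟩

theorem suppFn_eq_inner_of_mem_normalCone {M : Set H} {u q : H} (hq : q ∈ normalCone M u) :
    suppFn M q = ((⟪u, q⟫ : ℝ) : EReal) := by
  refine le_antisymm (iSup_le fun y => EReal.coe_le_coe_iff.mpr ?_)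
    (le_iSup (fun y : M => ((⟪(y : H), q⟫ : ℝ) : EReal)) ⟨u, hq.1⟩)
  have hy := hq.2 y y.2
  rw [real_inner_comm, inner_sub_left] at hy
  linarith

theorem inner_add_inner_le_iSup_fitzpatrickFn_sub_suppFn (B : H → H) {M : Set H} {u q : H}
    (hq : q ∈ normalCone M u) (y : H) :
    ((⟪u - y, B y⟫ + ⟪y - u, q⟫ : ℝ) : EReal) ≤
      (⨆ u' : M, fitzpatrickFn B (u' : H) q) - suppFn M q := by
  have hfitz : ((⟪u, B y⟫ + ⟪y, q⟫ - ⟪y, B y⟫ : ℝ) : EReal) ≤ ⨆ u' : M, fitzpatrickFn B u' q :=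
    (le_iSup (fun y : H => ((⟪u, B y⟫ + ⟪y, q⟫ - ⟪y, B y⟫ : ℝ) : EReal)) y).trans
      (le_iSup (fun u' : M => fitzpatrickFn B (u' : H) q) ⟨u, hq.1⟩)
  rw [suppFn_eq_inner_of_mem_normalCone hq]
  calc ((⟪u - y, B y⟫ + ⟪y - u, q⟫ : ℝ) : EReal)
      = ((⟪u, B y⟫ + ⟪y, q⟫ - ⟪y, B y⟫ : ℝ) : EReal) - ((⟪u, q⟫ : ℝ) : EReal) := by
        rw [← EReal.coe_sub, inner_sub_left, inner_sub_left]
        ring_nf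
    _ ≤ _ := EReal.sub_le_sub hfitz le_rfl

theorem fbf_step_sq_dist_sub_le {A : H → Set H} {B D : H → H} {μ η : ℝ}
    (hA : ∀ ⦃x u y v : H⦄, u ∈ A x → v ∈ A y → (0 : ℝ) ≤ ⟪x - y, u - v⟫)
    (hDmon : ∀ x y : H, (0 : ℝ) ≤ ⟪x - y, D x - D y⟫)
    (hDlip : ∀ x y : H, ‖D x - D y‖ ≤ η⁻¹ * ‖x - y‖)
    (hBlip : ∀ x y : H, ‖B x - B y‖ ≤ μ⁻¹ * ‖x - y‖)
    {xm xn pn a xnext u v p w : H} {lam βn αn : ℝ} (hlam : 0 ≤ lam) (hβn : 0 ≤ βn)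
    (hαn : 0 ≤ αn) (ha : a ∈ A pn)
    (hpn : (xn - lam • D xn - (lam * βn) • B xn + αn • (xn - xm)) - pn = lam • a)
    (hxnext : xnext = (lam * βn) • (B xn - B pn) + lam • (D xn - D pn) + pn)
    (hv : v ∈ A u) (hw : w = v + p + D u) :
    ‖xnext - u‖ ^ 2 - ‖xn - u‖ ^ 2 ≤
      αn * (‖xn - u‖ ^ 2 - ‖xm - u‖ ^ 2) + 2 * αn * ‖xn - xm‖ ^ 2 -
        (1 - (lam * βn / μ + lam / η) ^ 2 - αn) * ‖xn - pn‖ ^ 2 + 2 * lam * ⟪u - pn, w⟫ +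
        2 * lam * βn * ⟪u - pn, B pn⟫ + 2 * lam * ⟪pn - u, p⟫ := by
  have hstep : xnext - xn = αn • (xn - xm) - lam • (a + D pn) - (lam * βn) • B pn := by
    rw [hxnext, smul_add, ← hpn]
    module
  have hlip : ‖xnext - pn‖ ^ 2 ≤ (lam * βn / μ + lam / η) ^ 2 * ‖xn - pn‖ ^ 2 := by
    have h := norm_smul_add_smul_sub_le_of_lipschitz hBlip hDlip (mul_nonneg hlam hβn) hlam xn pn
    rw [← add_sub_cancel_right ((lam * βn) • (B xn - B pn) + lam • (D xn - D pn)) pn,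
      ← hxnext] at h
    rw [← mul_pow]
    exact pow_le_pow_left₀ (norm_nonneg _) h 2
  have hthree := norm_sub_sq_eq_three_point xn xnext pn u
  have hmon := mul_le_mul_of_nonneg_left (inner_add_le_inner_add_of_monotone hA hDmon ha hv) hlam
  have hinertial := mul_le_mul_of_nonneg_left (two_mul_inner_sub_le_inertial xn xm pn u) hαn
  have hw' : ⟪u - pn, w⟫ = -⟪pn - u, v + D u⟫ - ⟪pn - u, p⟫ := by
    rw [hw, ← neg_sub pn u, inner_neg_left, add_right_comm, inner_add_right]
    ring
  rw [hstep, inner_sub_right, inner_sub_right, inner_smul_right, inner_smul_right,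
    inner_smul_right] at hthree
  rw [hw', ← neg_sub pn u, inner_neg_left]
  linarith

end FBF

theorem fbf_inertial_one_step_estimate_general {H : Type*} [NormedAddCommGroup H]
    [InnerProductSpace ℝ H]
    (A : H → Set H) (hA : IsMaximallyMonotone A)
    (D : H → H) (η : ℝ)
    (hDmon : ∀ x y : H, (0 : ℝ) ≤ ⟪x - y, D x - D y⟫)
    (hDlip : ∀ x y : H, ‖D x - D y‖ ≤ η⁻¹ * ‖x - y‖)
    (B : H → H) (μ : ℝ)
    (hBlip : ∀ x y : H, ‖B x - B y‖ ≤ μ⁻¹ * ‖x - y‖)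
    (M : Set H)
    (xm xn : H) (lam βn αn : ℝ) (hlam : 0 < lam) (hβn : 0 < βn) (hαn : 0 ≤ αn)
    (pn : H)
    (hpn : ∃ a ∈ A pn,
      (xn - lam • D xn - (lam * βn) • B xn + αn • (xn - xm)) - pn = lam • a)
    (xnext : H)
    (hxnext : xnext = (lam * βn) • (B xn - B pn) + lam • (D xn - D pn) + pn)
    (u v p w : H) (hv : v ∈ A u) (hp : p ∈ normalCone M u) (hw : w = v + p + D u) :
    ((‖xnext - u‖ ^ 2 - ‖xn - u‖ ^ 2 : ℝ) : EReal) ≤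
      ((αn * (‖xn - u‖ ^ 2 - ‖xm - u‖ ^ 2) + 2 * αn * ‖xn - xm‖ ^ 2 -
          (1 - (lam * βn / μ + lam / η) ^ 2 - αn) * ‖xn - pn‖ ^ 2 +
          2 * lam * ⟪u - pn, w⟫ : ℝ) : EReal) +
        ((2 * lam * βn : ℝ) : EReal) *
          ((⨆ u' : M, fitzpatrickFn B (u' : H) (βn⁻¹ • p)) - suppFn M (βn⁻¹ • p)) := by
  obtain ⟨a, ha, hpn⟩ := hpn
  have hreal :=
    fbf_step_sq_dist_sub_le hA.1 hDmon hDlip hBlip hlam.le hβn.le hαn ha hpn hxnext hv hw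
  have hpenalty := inner_add_inner_le_iSup_fitzpatrickFn_sub_suppFn B
    (smul_mem_normalCone hp (inv_nonneg.2 hβn.le)) pn
  have hscale : 2 * lam * ⟪pn - u, p⟫ = 2 * lam * βn * ⟪pn - u, βn⁻¹ • p⟫ := by
    rw [inner_smul_right]
    field_simp
  calc ((‖xnext - u‖ ^ 2 - ‖xn - u‖ ^ 2 : ℝ) : EReal)
      ≤ ((αn * (‖xn - u‖ ^ 2 - ‖xm - u‖ ^ 2) + 2 * αn * ‖xn - xm‖ ^ 2 -
          (1 - (lam * βn / μ + lam / η) ^ 2 - αn) * ‖xn - pn‖ ^ 2 +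
          2 * lam * ⟪u - pn, w⟫ : ℝ) : EReal) +
        ((2 * lam * βn : ℝ) : EReal) * ((⟪u - pn, B pn⟫ + ⟪pn - u, βn⁻¹ • p⟫ : ℝ) : EReal) := by
        rw [← EReal.coe_mul, ← EReal.coe_add, EReal.coe_le_coe_iff]
        linarith
    _ ≤ _ := by gcongr

/-- The central one-step estimate (Lemma 3) for the inertial
forward-backward-forward penalty algorithm. -/
theorem fbf_inertial_one_step_estimate {H : Type*} [NormedAddCommGroup H]
    [InnerProductSpace ℝ H] [CompleteSpace H]
    (A : H → Set H) (hA : IsMaximallyMonotone A)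
    (D : H → H) (η : ℝ) (hη : 0 < η)
    (hDmon : ∀ x y : H, (0 : ℝ) ≤ ⟪x - y, D x - D y⟫)
    (hDlip : ∀ x y : H, ‖D x - D y‖ ≤ η⁻¹ * ‖x - y‖)
    (B : H → H) (μ : ℝ) (hμ : 0 < μ)
    (hBmon : ∀ x y : H, (0 : ℝ) ≤ ⟪x - y, B x - B y⟫)
    (hBlip : ∀ x y : H, ‖B x - B y‖ ≤ μ⁻¹ * ‖x - y‖)
    (M : Set H) (hM : M = {x : H | B x = 0}) (hMne : M.Nonempty)
    (xm xn : H) (lam βn αn : ℝ) (hlam : 0 < lam) (hβn : 0 < βn) (hαn : 0 ≤ αn)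
    (pn : H)
    (hpn : ∃ a ∈ A pn,
      (xn - lam • D xn - (lam * βn) • B xn + αn • (xn - xm)) - pn = lam • a)
    (xnext : H)
    (hxnext : xnext = (lam * βn) • (B xn - B pn) + lam • (D xn - D pn) + pn)
    (u v p w : H) (hv : v ∈ A u) (hp : p ∈ normalCone M u) (hw : w = v + p + D u) :
    ((‖xnext - u‖ ^ 2 - ‖xn - u‖ ^ 2 : ℝ) : EReal) ≤
      ((αn * (‖xn - u‖ ^ 2 - ‖xm - u‖ ^ 2) + 2 * αn * ‖xn - xm‖ ^ 2 -
          (1 - (lam * βn / μ + lam / η) ^ 2 - αn) * ‖xn - pn‖ ^ 2 +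
          2 * lam * ⟪u - pn, w⟫ : ℝ) : EReal) +
        ((2 * lam * βn : ℝ) : EReal) *
          ((⨆ u' : M, fitzpatrickFn B (u' : H) (βn⁻¹ • p)) - suppFn M (βn⁻¹ • p)) :=
  fbf_inertial_one_step_estimate_general A hA D η hDmon hDlip B μ hBlip M xm xn lam βn αn hlam hβn
    hαn pn hpn xnext hxnext u v p w hv hp hw
end
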